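/- Define v_{k,n} := sum over i from n+1 to n+k of [ -C(n-i, i) * C(n+k+i, 2i+1) + C(n-i, i-1) * C(n+k+i, 2i) ] with generalized binomial coefficients. Then for every k ≥ 1, v_{k+1, 0} = 1 + v_{k, 0} - v_{k+1, -1}. -/

import Mathlib

open Finset

/-- Generalized binomial coefficient: classical for nonnegative upper index,
`(-1)^k * C(k-m-1, k)` for negative upper index, and `0` for negative lower index. -/
def gchoose (m k : ℤ) : ℤ :=
  if k < 0 then 0
  else if m < 0 then (-1) ^ k.toNat * ((k - m - 1).toNat.choose k.toNat : ℤ)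
  else (m.toNat.choose k.toNat : ℤ)

/-- The double sequence `v_{k,n}`. -/
noncomputable def vseq (k n : ℤ) : ℤ :=
  ∑ i ∈ Finset.Icc (n + 1) (n + k),
    (-(gchoose (n - i) i * gchoose (n + k + i) (2 * i + 1))
      + gchoose (n - i) (i - 1) * gchoose (n + k + i) (2 * i))

/-! The generalized binomial coefficients are `Ring.choose` on `ℤ`, so Pascal's rule
`C(m+1, j+1) = C(m, j) + C(m, j+1)` holds at all integer arguments. Applying it to both factors
of every summand shows that, summand by summand, `v_{k+1,n} - v_{k,n} + v_{k+1,n-1}` telescopes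
in `i ↦ C(n-1-i, i) C(n+k+1+i, 2i+1)`, up to one extra summand at each end of the range.
At `n = 0` the four surviving terms are `C(-k-1, k)`, `-k`, `k + 1` and `-C(-k-1, k)`. -/

lemma gchoose_eq_ringChoose (m : ℤ) {k : ℤ} (hk : 0 ≤ k) :
    gchoose m k = Ring.choose m k.toNat := by
  rw [gchoose, if_neg (not_lt.2 hk)]
  split_ifs with hm
  · obtain ⟨r, rfl⟩ : ∃ r : ℕ, m = -r := ⟨(-m).toNat, by omega⟩
    rw [Ring.choose_neg, Units.smul_def, Int.coe_negOnePow_natCast, smul_eq_mul,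
      show (r : ℤ) + k.toNat - 1 = ((k - -r - 1).toNat : ℕ) by omega, Ring.choose_natCast]
  · lift m to ℕ using not_lt.1 hm
    rw [Int.toNat_natCast, Ring.choose_natCast]

lemma gchoose_of_neg_right (m : ℤ) {k : ℤ} (hk : k < 0) : gchoose m k = 0 :=
  if_pos hk

lemma gchoose_zero_right (m : ℤ) : gchoose m 0 = 1 := by
  rw [gchoose_eq_ringChoose m le_rfl, Int.toNat_zero, Ring.choose_zero_right]

lemma gchoose_one_right (m : ℤ) : gchoose m 1 = m := by
  rw [gchoose_eq_ringChoose m zero_le_one, Int.toNat_one, Ring.choose_one_right]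

lemma gchoose_self {m : ℤ} (hm : 0 ≤ m) : gchoose m m = 1 := by
  lift m to ℕ using hm
  rw [gchoose_eq_ringChoose _ m.cast_nonneg, Int.toNat_natCast, Ring.choose_natCast,
    Nat.choose_self, Nat.cast_one]

lemma gchoose_of_lt {m k : ℤ} (hm : 0 ≤ m) (hmk : m < k) : gchoose m k = 0 := by
  lift m to ℕ using hm
  rw [gchoose_eq_ringChoose _ (by omega), Ring.choose_natCast,
    Nat.choose_eq_zero_of_lt (by omega), Nat.cast_zero]

lemma gchoose_add_one_add_one (m k : ℤ) :
    gchoose (m + 1) (k + 1) = gchoose m k + gchoose m (k + 1) := by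
  rcases lt_trichotomy k (-1) with hk | rfl | hk
  · simp only [gchoose_of_neg_right _ (show k < 0 by omega),
      gchoose_of_neg_right _ (show k + 1 < 0 by omega), add_zero]
  · simp [gchoose_of_neg_right, gchoose_zero_right]
  · rw [gchoose_eq_ringChoose _ (by omega), gchoose_eq_ringChoose _ (by omega),
      gchoose_eq_ringChoose _ (by omega), show (k + 1).toNat = k.toNat + 1 by omega,
      Ring.choose_succ_succ]

lemma sum_Icc_sub_one_sub {G : Type*} [AddCommGroup G] (f : ℤ → G) {a b : ℤ}
    (hab : a ≤ b + 1) :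
    ∑ i ∈ Icc a b, (f (i - 1) - f i) = f (a - 1) - f b := by
  obtain ⟨n, rfl⟩ : ∃ n : ℕ, b = a - 1 + n := ⟨(b - a + 1).toNat, by omega⟩
  induction n with
  | zero => simp
  | succ n ih =>
    rw [Nat.cast_succ, ← add_assoc, ← insert_Icc_right_eq_Icc_add_one (by omega),
      sum_insert (by simp), ih (by omega), add_sub_cancel_right]
    abel

def vterm (n k i : ℤ) : ℤ :=
  -(gchoose (n - i) i * gchoose (n + k + i) (2 * i + 1))
    + gchoose (n - i) (i - 1) * gchoose (n + k + i) (2 * i)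

lemma vseq_eq_sum_vterm (k n : ℤ) : vseq k n = ∑ i ∈ Icc (n + 1) (n + k), vterm n k i := rfl

def vflux (n k i : ℤ) : ℤ :=
  gchoose (n - 1 - i) i * gchoose (n + k + 1 + i) (2 * i + 1)

lemma vterm_succ_sub_add_vterm (n k i : ℤ) :
    vterm n (k + 1) i - vterm n k i + vterm (n - 1) (k + 1) i
      = vflux n k (i - 1) - vflux n k i := by
  have h1 := gchoose_add_one_add_one (n - 1 - i) (i - 1)
  have h2 := gchoose_add_one_add_one (n - 1 - i) (i - 2)
  have h3 := gchoose_add_one_add_one (n + k + i) (2 * i)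
  have h4 := gchoose_add_one_add_one (n + k + i) (2 * i - 1)
  simp only [vterm, vflux]
  ring_nf at h1 h2 h3 h4 ⊢
  rw [h1, h2, h3, h4]
  ring

lemma vseq_succ_sub_add_vseq (n : ℤ) {k : ℤ} (hk : 0 ≤ k) :
    vseq (k + 1) n - vseq k n + vseq (k + 1) (n - 1)
      = vterm n (k + 1) (n + k + 1) + vterm (n - 1) (k + 1) n
          + vflux n k n - vflux n k (n + k) := by
  have hlast : vseq (k + 1) n
      = ∑ i ∈ Icc (n + 1) (n + k), vterm n (k + 1) i + vterm n (k + 1) (n + k + 1) := by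
    rw [vseq_eq_sum_vterm, ← add_assoc, ← insert_Icc_right_eq_Icc_add_one (by omega),
      sum_insert (by simp), add_comm]
  have hfirst : vseq (k + 1) (n - 1)
      = vterm (n - 1) (k + 1) n + ∑ i ∈ Icc (n + 1) (n + k), vterm (n - 1) (k + 1) i := by
    rw [vseq_eq_sum_vterm, sub_add_cancel, show n - 1 + (k + 1) = n + k by ring,
      ← insert_Icc_add_one_left_eq_Icc (by omega), sum_insert (by simp)]
  have htel : ∑ i ∈ Icc (n + 1) (n + k),
      (vterm n (k + 1) i - vterm n k i + vterm (n - 1) (k + 1) i)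
        = vflux n k n - vflux n k (n + k) := by
    simp_rw [vterm_succ_sub_add_vterm]
    rw [sum_Icc_sub_one_sub _ (by omega), add_sub_cancel_right]
  rw [sum_add_distrib, sum_sub_distrib] at htel
  rw [hlast, hfirst, vseq_eq_sum_vterm k n]
  linear_combination htel

theorem stmt_9 (k : ℤ) (hk : 1 ≤ k) :
    vseq (k + 1) 0 = 1 + vseq k 0 - vseq (k + 1) (-1) := by
  have h := vseq_succ_sub_add_vseq 0 (by omega : 0 ≤ k)
  have hboundary : vterm 0 (k + 1) (0 + k + 1) + vterm (0 - 1) (k + 1) 0 + vflux 0 k 0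
      - vflux 0 k (0 + k) = 1 := by
    have e1 : gchoose (2 * k + 2) (2 * k + 3) = 0 := gchoose_of_lt (by omega) (by omega)
    have e2 : gchoose (2 * k + 2) (2 * k + 2) = 1 := gchoose_self (by omega)
    have e3 : gchoose (2 * k + 1) (2 * k + 1) = 1 := gchoose_self (by omega)
    simp only [vterm, vflux]
    ring_nf at e1 e2 e3 ⊢
    simp only [e1, e2, e3, gchoose_zero_right, gchoose_one_right,
      gchoose_of_neg_right _ (show (-1 : ℤ) < 0 by norm_num)]
    ring
  rw [hboundary, zero_sub] at h
  linear_combination h
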